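/- arXiv:2109.00270 — 8 statements merged into one kernel-verified Lean document; each statement's English description precedes it below -/
import Mathlib

section
/- Let C be a flag code of type (t_1,…,t_r) on F_q^n and suppose the projected code C_i has maximum possible distance 2t_i with 2t_i ≤ n. Then for any two flags F, F' in C with F_i ≠ F'_i and any j ≤ i, one has d_S(F_j, F'_j) = 2t_j; in particular F_j ≠ F'_j, so |C_i| ≤ |C_j| for all j ≤ i. -/
open Module

/-- The subspace distance `d_S(U,V) = dim(U+V) - dim(U∩V)`. -/
noncomputable def dS {K V : Type*} [Field K] [AddCommGroup V] [Module K V]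
    (U W : Submodule K V) : ℕ :=
  finrank K ↥(U ⊔ W) - finrank K ↥(U ⊓ W)

/-- If `C` is a flag code of type `(t_1,…,t_r)` on `F_q^n` whose `i`-th projected code has the
maximum possible distance `2 t_i` with `2 t_i ≤ n`, then for any flags `F ≠ F'` of `C` with
`F_i ≠ F'_i` and any `j ≤ i` one has `d_S(F_j, F'_j) = 2 t_j` and `F_j ≠ F'_j`; in particular
`|C_i| ≤ |C_j|` for all `j ≤ i`. -/
theorem stmt8 {K : Type*} [Field K] [Fintype K] {n r : ℕ} {t : Fin r → ℕ}
    (C : Set (Fin r → Submodule K (Fin n → K))) (hCne : C.Nonempty)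
    (hpos : ∀ j, 0 < t j) (hlt : ∀ j, t j < n) (hstrict : StrictMono t)
    (hdim : ∀ F ∈ C, ∀ j, finrank K ↥(F j) = t j)
    (hnested : ∀ F ∈ C, Monotone F)
    (i : Fin r) (hi : 2 * t i ≤ n)
    (hmax : ∀ F ∈ C, ∀ F' ∈ C, F i ≠ F' i → dS (F i) (F' i) = 2 * t i) :
    (∀ F ∈ C, ∀ F' ∈ C, F i ≠ F' i → ∀ j ≤ i,
        dS (F j) (F' j) = 2 * t j ∧ F j ≠ F' j) ∧
    (∀ j ≤ i, ((fun F => F i) '' C).ncard ≤ ((fun F => F j) '' C).ncard) := by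
  classical
  have hD : ∀ F ∈ C, ∀ F' ∈ C, F i ≠ F' i → ∀ j ≤ i,
      dS (F j) (F' j) = 2 * t j ∧ F j ≠ F' j := by
    intro F hF F' hF' hne j hj
    have h1 := hmax F hF F' hF' hne
    have hsum : finrank K ↥(F i ⊔ F' i) + finrank K ↥(F i ⊓ F' i) = t i + t i := by
      rw [Submodule.finrank_sup_add_finrank_inf_eq, hdim F hF, hdim F' hF']
    have hb : finrank K ↥(F i ⊓ F' i) = 0 := by
      unfold dS at h1; omega
    have hbot : F i ⊓ F' i = ⊥ := by
      rwa [Submodule.finrank_eq_zero] at hb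
    have hle : F j ⊓ F' j ≤ F i ⊓ F' i :=
      inf_le_inf (hnested F hF hj) (hnested F' hF' hj)
    have hbotj : F j ⊓ F' j = ⊥ := le_bot_iff.mp (hbot ▸ hle)
    have hsumj : finrank K ↥(F j ⊔ F' j) + finrank K ↥(F j ⊓ F' j) = t j + t j := by
      rw [Submodule.finrank_sup_add_finrank_inf_eq, hdim F hF, hdim F' hF']
    have hbj : finrank K ↥(F j ⊓ F' j) = 0 := by rw [hbotj]; simp
    refine ⟨by unfold dS; omega, ?_⟩
    intro h
    have hFjbot : F j = ⊥ := by rw [← hbotj, h, inf_idem]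
    have := hdim F hF j
    rw [hFjbot] at this
    simp at this
    exact absurd this.symm (Nat.ne_of_gt (hpos j))
  refine ⟨hD, ?_⟩
  intro j hj
  have hfinS : Finite (Submodule K (Fin n → K)) :=
    Finite.of_injective _ SetLike.coe_injective
  have hfin : ((fun F => F j) '' C).Finite := Set.toFinite _
  set f : Submodule K (Fin n → K) → Submodule K (Fin n → K) :=
    fun U => if h : ∃ F ∈ C, F i = U then h.choose j else ⊥ with hf
  apply Set.ncard_le_ncard_of_injOn f _ _ hfin
  · intro U hU
    obtain ⟨F, hF, hFU⟩ := hU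
    have hex : ∃ F ∈ C, F i = U := ⟨F, hF, hFU⟩
    simp only [hf, dif_pos hex]
    exact ⟨hex.choose, hex.choose_spec.1, rfl⟩
  · intro U hU U' hU' hEq
    obtain ⟨F, hF, hFU⟩ := hU
    obtain ⟨F', hF', hFU'⟩ := hU'
    have hex : ∃ F ∈ C, F i = U := ⟨F, hF, hFU⟩
    have hex' : ∃ F ∈ C, F i = U' := ⟨F', hF', hFU'⟩
    simp only [hf, dif_pos hex, dif_pos hex'] at hEq
    by_contra hne
    have hnei : hex.choose i ≠ hex'.choose i := by
      rw [hex.choose_spec.2, hex'.choose_spec.2]; exact hne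
    exact (hD _ hex.choose_spec.1 _ hex'.choose_spec.1 hnei j hj).2 hEq
end

section
/- Let C be a flag code of type (t_1,…,t_r) on F_q^n and suppose the projected code C_i has maximum possible distance 2(n - t_i) with 2t_i ≥ n. Then for any two flags F, F' in C with F_i ≠ F'_i and any j ≥ i, one has d_S(F_j, F'_j) = 2(n - t_j); in particular F_j ≠ F'_j, so |C_i| ≤ |C_j| for all j ≥ i. -/
open Module

/-- If `C` is a flag code of type `(t_1,…,t_r)` on `F_q^n` whose `i`-th projected code has the
maximum possible distance `2(n - t_i)` with `2 t_i ≥ n`, then for any flags `F, F'` of `C` with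
`F_i ≠ F'_i` and any `j ≥ i` one has `d_S(F_j, F'_j) = 2(n - t_j)` and `F_j ≠ F'_j`; in
particular `|C_i| ≤ |C_j|` for all `j ≥ i`. -/
theorem stmt9 {K : Type*} [Field K] [Fintype K] {n r : ℕ} {t : Fin r → ℕ}
    (C : Set (Fin r → Submodule K (Fin n → K))) (hCne : C.Nonempty)
    (hpos : ∀ j, 0 < t j) (hlt : ∀ j, t j < n) (hstrict : StrictMono t)
    (hdim : ∀ F ∈ C, ∀ j, finrank K ↥(F j) = t j)
    (hnested : ∀ F ∈ C, Monotone F)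
    (i : Fin r) (hi : n ≤ 2 * t i)
    (hmax : ∀ F ∈ C, ∀ F' ∈ C, F i ≠ F' i → dS (F i) (F' i) = 2 * (n - t i)) :
    (∀ F ∈ C, ∀ F' ∈ C, F i ≠ F' i → ∀ j, i ≤ j →
        dS (F j) (F' j) = 2 * (n - t j) ∧ F j ≠ F' j) ∧
    (∀ j, i ≤ j → ((fun F => F i) '' C).ncard ≤ ((fun F => F j) '' C).ncard) := by
  classical
  have hfin : finrank K (Fin n → K) = n := by simp
  have key : ∀ F ∈ C, ∀ F' ∈ C, F i ≠ F' i → ∀ j, i ≤ j →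
      dS (F j) (F' j) = 2 * (n - t j) ∧ F j ≠ F' j := by
    intro F hF F' hF' hne j hij
    have htop : F i ⊔ F' i = ⊤ := by
      have hd := hmax F hF F' hF' hne
      have hsum := Submodule.finrank_sup_add_finrank_inf_eq (F i) (F' i)
      have hle := Submodule.finrank_le (F i ⊔ F' i)
      rw [hfin] at hle
      rw [hdim F hF i, hdim F' hF' i] at hsum
      unfold dS at hd
      have hti := hlt i
      have hsupn : finrank K ↥(F i ⊔ F' i) = n := by omega
      apply Submodule.eq_top_of_finrank_eq
      rw [hsupn, hfin]
    have htopj : F j ⊔ F' j = ⊤ := by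
      rw [eq_top_iff, ← htop]
      exact sup_le_sup (hnested F hF hij) (hnested F' hF' hij)
    have hsum := Submodule.finrank_sup_add_finrank_inf_eq (F j) (F' j)
    rw [hdim F hF j, hdim F' hF' j, htopj] at hsum
    have hsupn : finrank K ↥(⊤ : Submodule K (Fin n → K)) = n := by
      rw [finrank_top]; exact hfin
    have htj : t i ≤ t j := hstrict.monotone hij
    have hd : dS (F j) (F' j) = 2 * (n - t j) := by
      unfold dS; rw [htopj, hsupn]; have := hlt j; omega
    refine ⟨hd, ?_⟩
    intro h
    rw [h] at hd
    have hz : dS (F' j) (F' j) = 0 := by unfold dS; rw [sup_idem, inf_idem, Nat.sub_self]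
    rw [hz] at hd
    have := hlt j
    omega
  refine ⟨key, ?_⟩
  intro j hij
  have hFinSub : Finite (Submodule K (Fin n → K)) :=
    Finite.of_injective (fun U => (U : Set (Fin n → K))) SetLike.coe_injective
  set f : Submodule K (Fin n → K) → Submodule K (Fin n → K) :=
    fun U => if h : ∃ F ∈ C, F i = U then (Classical.choose h) j else ⊥ with hf
  apply Set.ncard_le_ncard_of_injOn f
  · rintro U ⟨F, hF, rfl⟩
    have h : ∃ G ∈ C, G i = F i := ⟨F, hF, rfl⟩
    simp only [hf, dif_pos h]
    obtain ⟨hG, hGi⟩ := Classical.choose_spec h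
    exact ⟨_, hG, rfl⟩
  · rintro U ⟨F, hF, rfl⟩ U' ⟨F', hF', rfl⟩ hEq
    have h : ∃ G ∈ C, G i = F i := ⟨F, hF, rfl⟩
    have h' : ∃ G ∈ C, G i = F' i := ⟨F', hF', rfl⟩
    simp only [hf, dif_pos h, dif_pos h'] at hEq
    obtain ⟨hG, hGi⟩ := Classical.choose_spec h
    obtain ⟨hG', hGi'⟩ := Classical.choose_spec h'
    show F i = F' i
    rw [← hGi, ← hGi']
    by_contra hne
    exact (key _ hG _ hG' hne j hij).2 hEq
end

section
/- Let C be a flag code of type (t_1,…,t_r) on F_q^n, let a = max{i : 2t_i ≤ n} and b = min{i : 2t_i ≥ n} (assume both exist). Then C is an optimum distance flag code, i.e. d_f(C) = 2(Σ_{2t_i ≤ n} t_i + Σ_{2t_i > n} (n - t_i)), if and only if the projected codes C_a and C_b are constant dimension codes of maximum distance with |C_a| = |C_b| = |C|. -/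
open Module

/-- The minimum flag distance of a flag code: the minimum of `d_f(F,F') = ∑ i, d_S(F_i,F'_i)`
over distinct pairs of flags. -/
noncomputable def flagMinDist {K V : Type*} [Field K] [AddCommGroup V] [Module K V] {r : ℕ}
    (C : Set (Fin r → Submodule K V)) : ℕ :=
  sInf {d | ∃ F ∈ C, ∃ F' ∈ C, F ≠ F' ∧ d = ∑ i, dS (F i) (F' i)}

/-- A flag code `C` of type `(t_1,…,t_r)` on `F_q^n` is an optimum distance flag code, i.e.
`d_f(C) = 2(∑_{2t_i ≤ n} t_i + ∑_{2t_i > n} (n - t_i))`, if and only if the projected codes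
`C_a` and `C_b` (where `a = max{i : 2t_i ≤ n}` and `b = min{i : 2t_i ≥ n}`) are constant
dimension codes of maximum distance with `|C_a| = |C_b| = |C|`. -/
theorem stmt10 {K : Type*} [Field K] [Fintype K] {n r : ℕ} {t : Fin r → ℕ}
    (C : Set (Fin r → Submodule K (Fin n → K))) (hCne : C.Nonempty)
    (hpos : ∀ j, 0 < t j) (hlt : ∀ j, t j < n) (hstrict : StrictMono t)
    (hdim : ∀ F ∈ C, ∀ j, finrank K ↥(F j) = t j)
    (hnested : ∀ F ∈ C, Monotone F)
    (a b : Fin r) (ha : 2 * t a ≤ n) (hamax : ∀ i, 2 * t i ≤ n → i ≤ a)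
    (hb : n ≤ 2 * t b) (hbmin : ∀ i, n ≤ 2 * t i → b ≤ i) :
    flagMinDist C = 2 * ∑ i, (if 2 * t i ≤ n then t i else n - t i) ↔
      ((∃ F ∈ C, ∃ F' ∈ C, F a ≠ F' a) ∧
       (∀ F ∈ C, ∀ F' ∈ C, F a ≠ F' a → dS (F a) (F' a) = 2 * t a) ∧
       (∀ F ∈ C, ∀ F' ∈ C, F b ≠ F' b → dS (F b) (F' b) = 2 * (n - t b)) ∧
       ((fun F => F a) '' C).ncard = C.ncard ∧
       ((fun F => F b) '' C).ncard = C.ncard) := by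
  classical
  set D := 2 * ∑ i, (if 2 * t i ≤ n then t i else n - t i) with hD
  have hfin : C.Finite := Set.toFinite C
  have key : ∀ U W : Submodule K (Fin n → K),
      finrank K ↥(U ⊓ W) ≤ finrank K ↥(U ⊔ W) ∧ finrank K ↥(U ⊔ W) ≤ n ∧
      finrank K ↥(U ⊔ W) + finrank K ↥(U ⊓ W) = finrank K U + finrank K W := by
    intro U W
    exact ⟨Submodule.finrank_mono (le_trans inf_le_left le_sup_left),
      by simpa using Submodule.finrank_le (U ⊔ W),
      Submodule.finrank_sup_add_finrank_inf_eq U W⟩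
  have htop : ∀ U : Submodule K (Fin n → K), U = ⊤ ↔ finrank K U = n := by
    intro U
    constructor
    · rintro rfl; simp
    · intro h; exact Submodule.eq_top_of_finrank_eq (by simp [h])
  have hbound : ∀ F ∈ C, ∀ F' ∈ C, ∀ i,
      dS (F i) (F' i) ≤ 2 * (if 2 * t i ≤ n then t i else n - t i) := by
    intro F hF F' hF' i
    obtain ⟨h1, h2, h3⟩ := key (F i) (F' i)
    rw [hdim F hF i, hdim F' hF' i] at h3
    unfold dS
    split <;> omega
  have hsum_le : ∀ F ∈ C, ∀ F' ∈ C, ∑ i, dS (F i) (F' i) ≤ D := by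
    intro F hF F' hF'
    rw [hD, Finset.mul_sum]
    exact Finset.sum_le_sum fun i _ => hbound F hF F' hF' i
  have hinf_bot : ∀ F ∈ C, ∀ F' ∈ C, ∀ i,
      (F i ⊓ F' i = ⊥ ↔ dS (F i) (F' i) = 2 * t i) := by
    intro F hF F' hF' i
    obtain ⟨h1, h2, h3⟩ := key (F i) (F' i)
    rw [hdim F hF i, hdim F' hF' i] at h3
    have hz : finrank K ↥(F i ⊓ F' i) = 0 ↔ F i ⊓ F' i = ⊥ := Submodule.finrank_eq_zero
    rw [← hz]
    unfold dS
    omega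
  have hsup_top : ∀ F ∈ C, ∀ F' ∈ C, ∀ i,
      (F i ⊔ F' i = ⊤ ↔ dS (F i) (F' i) = 2 * (n - t i)) := by
    intro F hF F' hF' i
    obtain ⟨h1, h2, h3⟩ := key (F i) (F' i)
    rw [hdim F hF i, hdim F' hF' i] at h3
    have h4 := hlt i
    rw [htop]
    unfold dS
    omega
  have hpair : (∀ F ∈ C, ∀ F' ∈ C, F a ≠ F' a → dS (F a) (F' a) = 2 * t a) →
      (∀ F ∈ C, ∀ F' ∈ C, F b ≠ F' b → dS (F b) (F' b) = 2 * (n - t b)) →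
      ((fun F => F a) '' C).ncard = C.ncard → ((fun F => F b) '' C).ncard = C.ncard →
      ∀ F ∈ C, ∀ F' ∈ C, F ≠ F' → ∑ i, dS (F i) (F' i) = D := by
    intro h2 h3 h4 h5 F hF F' hF' hne
    have hina : Set.InjOn (fun F => F a) C := Set.injOn_of_ncard_image_eq h4 hfin
    have hinb : Set.InjOn (fun F => F b) C := Set.injOn_of_ncard_image_eq h5 hfin
    have hFa : F a ≠ F' a := fun h => hne (hina hF hF' h)
    have hFb : F b ≠ F' b := fun h => hne (hinb hF hF' h)
    have hbota : F a ⊓ F' a = ⊥ := (hinf_bot F hF F' hF' a).2 (h2 F hF F' hF' hFa)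
    have htopb : F b ⊔ F' b = ⊤ := (hsup_top F hF F' hF' b).2 (h3 F hF F' hF' hFb)
    rw [hD, Finset.mul_sum]
    refine Finset.sum_congr rfl fun i _ => ?_
    by_cases hi : 2 * t i ≤ n
    · have hia : i ≤ a := hamax i hi
      have hbot : F i ⊓ F' i = ⊥ := by
        rw [← le_bot_iff, ← hbota]
        exact inf_le_inf (hnested F hF hia) (hnested F' hF' hia)
      rw [if_pos hi]
      exact (hinf_bot F hF F' hF' i).1 hbot
    · have hib : b ≤ i := hbmin i (le_of_lt (lt_of_not_ge hi))
      have htp : F i ⊔ F' i = ⊤ := by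
        rw [eq_top_iff, ← htopb]
        exact sup_le_sup (hnested F hF hib) (hnested F' hF' hib)
      rw [if_neg hi]
      exact (hsup_top F hF F' hF' i).1 htp
  constructor
  · intro hODist
    have hDpos : 0 < D := by
      have h1 : (if 2 * t a ≤ n then t a else n - t a) ≤
          ∑ i, (if 2 * t i ≤ n then t i else n - t i) :=
        Finset.single_le_sum (f := fun i => if 2 * t i ≤ n then t i else n - t i)
          (fun i _ => Nat.zero_le _) (Finset.mem_univ a)
      rw [if_pos ha] at h1
      have := hpos a
      omega
    have hsetne : {d | ∃ F ∈ C, ∃ F' ∈ C, F ≠ F' ∧ d = ∑ i, dS (F i) (F' i)}.Nonempty := by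
      by_contra h
      rw [Set.not_nonempty_iff_eq_empty] at h
      unfold flagMinDist at hODist
      rw [h, Nat.sInf_empty] at hODist
      omega
    have hall : ∀ F ∈ C, ∀ F' ∈ C, F ≠ F' → ∑ i, dS (F i) (F' i) = D := by
      intro F hF F' hF' hne
      have h1 : D ≤ ∑ i, dS (F i) (F' i) := by
        rw [← hODist]
        exact Nat.sInf_le ⟨F, hF, F', hF', hne, rfl⟩
      exact le_antisymm (hsum_le F hF F' hF') h1
    have hterm : ∀ F ∈ C, ∀ F' ∈ C, F ≠ F' → ∀ i,
        dS (F i) (F' i) = 2 * (if 2 * t i ≤ n then t i else n - t i) := by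
      intro F hF F' hF' hne i
      have h1 := hall F hF F' hF' hne
      rw [hD, Finset.mul_sum] at h1
      exact (Finset.sum_eq_sum_iff_of_le (fun i _ => hbound F hF F' hF' i)).1 h1 i
        (Finset.mem_univ i)
    have hterma : ∀ F ∈ C, ∀ F' ∈ C, F ≠ F' → dS (F a) (F' a) = 2 * t a := by
      intro F hF F' hF' hne
      have h1 := hterm F hF F' hF' hne a
      rwa [if_pos ha] at h1
    have htermb : ∀ F ∈ C, ∀ F' ∈ C, F ≠ F' → dS (F b) (F' b) = 2 * (n - t b) := by
      intro F hF F' hF' hne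
      have h1 := hterm F hF F' hF' hne b
      by_cases hbb : 2 * t b ≤ n
      · rw [if_pos hbb] at h1; omega
      · rwa [if_neg hbb] at h1
    have hdpa : ∀ F ∈ C, ∀ F' ∈ C, F ≠ F' → F a ≠ F' a := by
      intro F hF F' hF' hne h
      have h1 := hterma F hF F' hF' hne
      rw [h] at h1
      have hz : dS (F' a) (F' a) = 0 := by unfold dS; rw [sup_idem, inf_idem, Nat.sub_self]
      rw [hz] at h1
      have := hpos a
      omega
    have hdpb : ∀ F ∈ C, ∀ F' ∈ C, F ≠ F' → F b ≠ F' b := by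
      intro F hF F' hF' hne h
      have h1 := htermb F hF F' hF' hne
      rw [h] at h1
      have hz : dS (F' b) (F' b) = 0 := by unfold dS; rw [sup_idem, inf_idem, Nat.sub_self]
      rw [hz] at h1
      have := hlt b
      omega
    obtain ⟨d, F, hF, F', hF', hne, hd⟩ := hsetne
    refine ⟨⟨F, hF, F', hF', hdpa F hF F' hF' hne⟩,
      fun F hF F' hF' h => hterma F hF F' hF' (fun e => h (by rw [e])),
      fun F hF F' hF' h => htermb F hF F' hF' (fun e => h (by rw [e])), ?_, ?_⟩
    · exact Set.ncard_image_of_injOn fun F hF F' hF' h => by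
        by_contra hne; exact hdpa F hF F' hF' hne h
    · exact Set.ncard_image_of_injOn fun F hF F' hF' h => by
        by_contra hne; exact hdpb F hF F' hF' hne h
  · rintro ⟨⟨F0, hF0, F0', hF0', hne0⟩, h2, h3, h4, h5⟩
    have hall := hpair h2 h3 h4 h5
    have hne : F0 ≠ F0' := fun e => hne0 (by rw [e])
    have hset : {d | ∃ F ∈ C, ∃ F' ∈ C, F ≠ F' ∧ d = ∑ i, dS (F i) (F' i)} = {D} := by
      ext d
      simp only [Set.mem_setOf_eq, Set.mem_singleton_iff]
      constructor
      · rintro ⟨F, hF, F', hF', hne, rfl⟩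
        exact hall F hF F' hF' hne
      · rintro rfl
        exact ⟨F0, hF0, F0', hF0', hne, (hall F0 hF0 F0' hF0' hne).symm⟩
    unfold flagMinDist
    rw [hset]
    exact csInf_singleton D
end

section
/- Let F be a flag of type (t_1,…,t_r) on F_q^n and H a subgroup of GL(n,q) such that the orbit codes Orb_H(F_a) and Orb_H(F_b) have maximum distance (with a, b as defined). Then Stab_H(F_i) ⊆ Stab_H(F_a) for all i ≤ a, and Stab_H(F_i) ⊆ Stab_H(F_b) for all i ≥ b. -/
open Module

/-- Let `F` be a flag of type `(t_1,…,t_r)` on `F_q^n` and `H` a subgroup of `GL(n,q)`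
(realized as the group of linear automorphisms) such that the orbit codes of `F_a` and `F_b`
have maximum distance, where `a = max{i : 2t_i ≤ n}` and `b = min{i : 2t_i ≥ n}`. Then
`Stab_H(F_i) ⊆ Stab_H(F_a)` for all `i ≤ a` and `Stab_H(F_i) ⊆ Stab_H(F_b)` for all
`i ≥ b`. -/
theorem stmt11 {K : Type*} [Field K] [Fintype K] {n r : ℕ} {t : Fin r → ℕ}
    (F : Fin r → Submodule K (Fin n → K))
    (hpos : ∀ j, 0 < t j) (hlt : ∀ j, t j < n) (hstrict : StrictMono t)
    (hdim : ∀ j, finrank K ↥(F j) = t j) (hnested : Monotone F)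
    (H : Subgroup ((Fin n → K) ≃ₗ[K] (Fin n → K)))
    (a b : Fin r) (ha : 2 * t a ≤ n) (hamax : ∀ i, 2 * t i ≤ n → i ≤ a)
    (hb : n ≤ 2 * t b) (hbmin : ∀ i, n ≤ 2 * t i → b ≤ i)
    (hmaxa : ∀ A ∈ H, (F a).map A.toLinearMap ≠ F a →
        dS (F a) ((F a).map A.toLinearMap) = 2 * t a)
    (hmaxb : ∀ A ∈ H, (F b).map A.toLinearMap ≠ F b →
        dS (F b) ((F b).map A.toLinearMap) = 2 * (n - t b)) :
    (∀ i ≤ a, ∀ A ∈ H, (F i).map A.toLinearMap = F i → (F a).map A.toLinearMap = F a) ∧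
    (∀ i, b ≤ i → ∀ A ∈ H, (F i).map A.toLinearMap = F i →
        (F b).map A.toLinearMap = F b) := by
  constructor
  · intro i hi A hA hFi
    by_contra hne
    have hdS := hmaxa A hA hne
    set W := (F a).map A.toLinearMap with hW
    have hWdim : finrank K ↥W = t a := by
      rw [hW, LinearEquiv.finrank_map_eq, hdim]
    have hsum : finrank K ↥(F a ⊔ W) + finrank K ↥(F a ⊓ W) = t a + t a := by
      rw [Submodule.finrank_sup_add_finrank_inf_eq, hdim, hWdim]
    have hle : F i ≤ F a ⊓ W := by
      refine le_inf (hnested hi) ?_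
      rw [hW, ← hFi]
      exact Submodule.map_mono (hnested hi)
    have hfle : t i ≤ finrank K ↥(F a ⊓ W) := by
      rw [← hdim i]; exact Submodule.finrank_mono hle
    have := hpos i
    unfold dS at hdS
    omega
  · intro i hi A hA hFi
    by_contra hne
    have hdS := hmaxb A hA hne
    set W := (F b).map A.toLinearMap with hW
    have hWdim : finrank K ↥W = t b := by
      rw [hW, LinearEquiv.finrank_map_eq, hdim]
    have hsum : finrank K ↥(F b ⊔ W) + finrank K ↥(F b ⊓ W) = t b + t b := by
      rw [Submodule.finrank_sup_add_finrank_inf_eq, hdim, hWdim]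
    have hle : F b ⊔ W ≤ F i := by
      refine sup_le (hnested hi) ?_
      rw [hW, ← hFi]
      exact Submodule.map_mono (hnested hi)
    have hfle : finrank K ↥(F b ⊔ W) ≤ t i := by
      rw [← hdim i]; exact Submodule.finrank_mono hle
    have h1 := hlt i
    have h2 := hlt b
    unfold dS at hdS
    omega
end

section
/- Let F, F' be flags of the same type on F_q^n and H ≤ GL(n,q) with Orb_H(F) and Orb_H(F') disjoint flag codes. If Orb_H(F_i) = Orb_H(F'_i) for some index i, then Orb_H(F) ∪ Orb_H(F') is a disjoint flag code if and only if Orb_H(F) = Orb_H(F'). -/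
open Module

/-- Orbit of a flag under a subgroup of linear automorphisms, acting componentwise. -/
def flagOrbit {K W : Type*} [Field K] [AddCommGroup W] [Module K W] {r : ℕ}
    (H : Subgroup (W ≃ₗ[K] W)) (F : Fin r → Submodule K W) :
    Set (Fin r → Submodule K W) :=
  {G | ∃ A ∈ H, G = fun i => (F i).map A.toLinearMap}

/-- Orbit of a subspace under a subgroup of linear automorphisms. -/
def subOrbit {K W : Type*} [Field K] [AddCommGroup W] [Module K W]
    (H : Subgroup (W ≃ₗ[K] W)) (U : Submodule K W) : Set (Submodule K W) :=
  {Z | ∃ A ∈ H, Z = U.map A.toLinearMap}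

/-- A flag code is disjoint if its cardinality equals that of each of its projected codes. -/
def IsDisjointFlagCode {K W : Type*} [Field K] [AddCommGroup W] [Module K W] {r : ℕ}
    (C : Set (Fin r → Submodule K W)) : Prop :=
  ∀ i : Fin r, ((fun F => F i) '' C).ncard = C.ncard

lemma flagOrbit_proj {K W : Type*} [Field K] [AddCommGroup W] [Module K W] {r : ℕ}
    (H : Subgroup (W ≃ₗ[K] W)) (F : Fin r → Submodule K W) (j : Fin r) :
    (fun G => G j) '' flagOrbit H F = subOrbit H (F j) := by
  ext Z
  constructor
  · rintro ⟨G, ⟨A, hA, rfl⟩, rfl⟩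
    exact ⟨A, hA, rfl⟩
  · rintro ⟨A, hA, rfl⟩
    exact ⟨fun i => (F i).map A.toLinearMap, ⟨A, hA, rfl⟩, rfl⟩

lemma self_mem_flagOrbit {K W : Type*} [Field K] [AddCommGroup W] [Module K W] {r : ℕ}
    (H : Subgroup (W ≃ₗ[K] W)) (F : Fin r → Submodule K W) : F ∈ flagOrbit H F :=
  ⟨1, H.one_mem, by simp⟩

lemma flagOrbit_eq_of_mem {K W : Type*} [Field K] [AddCommGroup W] [Module K W] {r : ℕ}
    (H : Subgroup (W ≃ₗ[K] W)) {F F' : Fin r → Submodule K W}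
    (h : F' ∈ flagOrbit H F) : flagOrbit H F' = flagOrbit H F := by
  obtain ⟨A, hA, rfl⟩ := h
  ext G
  constructor
  · rintro ⟨B, hB, rfl⟩
    refine ⟨B * A, H.mul_mem hB hA, ?_⟩
    funext j
    show ((F j).map A.toLinearMap).map B.toLinearMap = (F j).map (A.trans B).toLinearMap
    rw [LinearEquiv.coe_trans, Submodule.map_comp]
  · rintro ⟨B, hB, rfl⟩
    refine ⟨B * A⁻¹, H.mul_mem hB (H.inv_mem hA), ?_⟩
    funext j
    show (F j).map B.toLinearMap
        = ((F j).map A.toLinearMap).map (A.symm.trans B).toLinearMap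
    rw [LinearEquiv.coe_trans, Submodule.map_comp]
    rw [show Submodule.map (A.symm : W →ₗ[K] W) ((F j).map A.toLinearMap)
        = F j by rw [← Submodule.map_comp]; simp]

/-- Let `F, F'` be flags of the same type on `F_q^n` and `H ≤ GL(n,q)` with `Orb_H(F)` and
`Orb_H(F')` disjoint flag codes. If `Orb_H(F_i) = Orb_H(F'_i)` for some index `i`, then
`Orb_H(F) ∪ Orb_H(F')` is a disjoint flag code iff `Orb_H(F) = Orb_H(F')`. -/
theorem stmt13 {K : Type*} [Field K] [Fintype K] {n r : ℕ} {t : Fin r → ℕ}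
    (F F' : Fin r → Submodule K (Fin n → K))
    (hpos : ∀ j, 0 < t j) (hlt : ∀ j, t j < n) (hstrict : StrictMono t)
    (hdim : ∀ j, finrank K ↥(F j) = t j) (hdim' : ∀ j, finrank K ↥(F' j) = t j)
    (hnested : Monotone F) (hnested' : Monotone F')
    (H : Subgroup ((Fin n → K) ≃ₗ[K] (Fin n → K)))
    (hdisj : IsDisjointFlagCode (flagOrbit H F))
    (hdisj' : IsDisjointFlagCode (flagOrbit H F'))
    (i : Fin r) (hi : subOrbit H (F i) = subOrbit H (F' i)) :
    IsDisjointFlagCode (flagOrbit H F ∪ flagOrbit H F') ↔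
      flagOrbit H F = flagOrbit H F' := by
  have hfinSub : Finite (Submodule K (Fin n → K)) :=
    Finite.of_injective (fun U => (U : Set (Fin n → K))) SetLike.coe_injective
  have hfinFlag : Finite (Fin r → Submodule K (Fin n → K)) := Pi.finite
  constructor
  · intro h
    have h1 := h i
    rw [Set.image_union, flagOrbit_proj, flagOrbit_proj, hi, Set.union_self] at h1
    have h2 := hdisj i
    rw [flagOrbit_proj] at h2
    rw [← hi, h2] at h1
    -- h1 : (flagOrbit H F).ncard = (flagOrbit H F ∪ flagOrbit H F').ncard
    have hsub : flagOrbit H F ⊆ flagOrbit H F ∪ flagOrbit H F' := Set.subset_union_left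
    have heq : flagOrbit H F = flagOrbit H F ∪ flagOrbit H F' :=
      Set.eq_of_subset_of_ncard_le hsub (le_of_eq h1.symm) (Set.toFinite _)
    have hF' : F' ∈ flagOrbit H F := by
      have : F' ∈ flagOrbit H F ∪ flagOrbit H F' :=
        Or.inr (self_mem_flagOrbit H F')
      rwa [← heq] at this
    exact (flagOrbit_eq_of_mem H hF').symm
  · intro h
    rw [h, Set.union_self]
    exact hdisj'
end

section
/- With G as above, let V = rowspace(V_1 | V_2) with V_1 ∈ F_q^{(k+1)×k}, V_2 ∈ F_q^{(k+1)×(k+1)} and rk(V_1 | V_2) = k+1, where k > 1. Then the orbit code Orb_G(V) ⊆ G_q(k+1, 2k+1) attains the maximum distance 2k (equivalently dim(V ∩ V·g) = 1 for every g ∈ G not stabilizing V, and the stabilizer is trivial) if and only if rk(V_1) = k and rk(V_2) = k+1. -/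
open Module

/-- The companion matrix of a (monic, degree `k+1`) polynomial `p`. -/
def companion {K : Type*} [Field K] {k : ℕ} (p : Polynomial K) :
    Matrix (Fin (k + 1)) (Fin (k + 1)) K :=
  Matrix.of fun i j =>
    if (i : ℕ) = k then -p.coeff (j : ℕ) else if (i : ℕ) + 1 = (j : ℕ) then 1 else 0

/-- The element `rowspace(V_1 | V_2 M^i)` of the orbit of `rowspace(V_1 | V_2)` under
`G = {diag(I_k, M^i)}`, inside `F_q^{2k+1} = F_q^k × F_q^{k+1}`. -/
def spV {K : Type*} [Field K] {k : ℕ}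
    (V1 : Matrix (Fin (k + 1)) (Fin k) K) (V2 : Matrix (Fin (k + 1)) (Fin (k + 1)) K)
    (M : Matrix (Fin (k + 1)) (Fin (k + 1)) K) (i : ℕ) :
    Submodule K (Fin k ⊕ Fin (k + 1) → K) :=
  Submodule.span K (Set.range fun r => Sum.elim (V1 r) (Matrix.vecMul (V2 r) (M ^ i)))

/-!
Counting shows that when `M` has order `q^(k+1) - 1`, the span `F_q[M]` of its powers is
`{0} ∪ ⟨M⟩`: every nonzero element of `F_q[M]` is invertible, and `⟨M⟩` acts transitively on
nonzero row vectors.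

Write `V_i = rowspace(V_1 | V_2 M^i)`. A vector `x (V_1 | V_2 M^i)` lies in `V_j` iff some `z`
has `d = x - z` in the left kernel `U` of `V_1` and `x V_2 (M^j - M^i) = d V_2 M^j`. When `V_2`
is invertible and `M^i ≠ M^j` this determines `x` from `d`, so `dim (V_i ∩ V_j) = dim U =
k + 1 - rk V_1`; this gives the converse and `rk V_1 = k`. If `rk V_2 < k`, the left kernel of
`V_2` alone gives `dim (V_0 ∩ V_1) ≥ 2`. If `rk V_2 = k ≥ 2`, pick `0 ≠ u ∈ U` and a vector `r`
of the row space of `V_2` off the line through `c = u V_2`; transitivity gives `i` with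
`(r - c) M^i = r`, and then `V_0 ∩ V_i` contains two independent vectors.
-/

open Matrix Polynomial Submodule

namespace SingerCycle

variable {K ι : Type*} [Field K] [Fintype ι] [DecidableEq ι] {M : Matrix ι ι K}

lemma natCard_span_range_pow [Fintype K] :
    Nat.card (span K (Set.range (M ^ ·))) =
      Fintype.card K ^ finrank K (span K (Set.range (M ^ ·))) := by
  rw [natCard_eq_pow_finrank (K := K), Nat.card_eq_fintype_card]

lemma ne_one_of_orderOf_eq [Fintype K] (hM : orderOf M = Fintype.card K ^ Fintype.card ι - 1)
    (hι : 2 ≤ Fintype.card ι) : M ≠ 1 := by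
  rintro rfl
  have : 2 ^ 2 ≤ Fintype.card K ^ Fintype.card ι :=
    (Nat.pow_le_pow_right two_pos hι).trans (Nat.pow_le_pow_left Fintype.one_lt_card _)
  rw [orderOf_one] at hM
  omega

variable [Nonempty ι]

lemma finrank_span_range_pow_le :
    finrank K (span K (Set.range (M ^ ·))) ≤ Fintype.card ι := by
  have hdeg : M.charpoly.natDegree ≠ 0 := by
    rw [charpoly_natDegree_eq_dim]; exact Fintype.card_ne_zero
  have hle : span K (Set.range (M ^ ·)) ≤
      span K (Set.range fun i : Fin (Fintype.card ι) => M ^ (i : ℕ)) := by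
    rw [span_le]
    rintro _ ⟨m, rfl⟩
    change M ^ m ∈ _
    rw [M.pow_eq_aeval_mod_charpoly, aeval_eq_sum_range' (by
      simpa [charpoly_natDegree_eq_dim] using
        natDegree_modByMonic_lt (X ^ m) M.charpoly_monic (fun h => by simp [h] at hdeg))]
    exact sum_mem fun i hi => smul_mem _ _ (subset_span ⟨⟨i, Finset.mem_range.1 hi⟩, rfl⟩)
  exact (finrank_mono hle).trans ((finrank_range_le_card _).trans_eq (Fintype.card_fin _))

variable [Fintype K]

lemma isUnit_of_orderOf_eq (hM : orderOf M = Fintype.card K ^ Fintype.card ι - 1) : IsUnit M := by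
  refine (orderOf_pos_iff.mp ?_).isUnit
  have : 1 < Fintype.card K ^ Fintype.card ι :=
    Nat.one_lt_pow Fintype.card_ne_zero Fintype.one_lt_card
  omega

lemma ncard_insert_zero_image_pow (hM : orderOf M = Fintype.card K ^ Fintype.card ι - 1) :
    (insert 0 ((M ^ ·) '' Set.Iio (orderOf M))).ncard = Fintype.card K ^ Fintype.card ι := by
  have hq : 1 ≤ Fintype.card K ^ Fintype.card ι := Nat.one_le_pow _ _ Fintype.card_pos
  have h0 : (0 : Matrix ι ι K) ∉ (M ^ ·) '' Set.Iio (orderOf M) := by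
    rintro ⟨i, -, hi⟩
    exact ((isUnit_of_orderOf_eq hM).pow i).ne_zero hi
  rw [Set.ncard_insert_of_notMem h0 ((Set.finite_Iio _).image _),
    pow_injOn_Iio_orderOf.ncard_image, Set.ncard_Iio_nat, hM]
  omega

lemma coe_span_range_pow (hM : orderOf M = Fintype.card K ^ Fintype.card ι - 1) :
    (span K (Set.range (M ^ ·)) : Set (Matrix ι ι K)) =
      insert 0 ((M ^ ·) '' Set.Iio (orderOf M)) := by
  have hsub : insert 0 ((M ^ ·) '' Set.Iio (orderOf M)) ⊆ span K (Set.range (M ^ ·)) :=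
    Set.insert_subset (zero_mem _) (by rintro _ ⟨i, -, rfl⟩; exact subset_span ⟨i, rfl⟩)
  refine (Set.eq_of_subset_of_ncard_le hsub ?_ (Set.toFinite _)).symm
  rw [ncard_insert_zero_image_pow hM, ← Nat.card_coe_set_eq, SetLike.coe_sort_coe,
    natCard_span_range_pow]
  exact Nat.pow_le_pow_right Fintype.card_pos finrank_span_range_pow_le

lemma finrank_span_range_pow (hM : orderOf M = Fintype.card K ^ Fintype.card ι - 1) :
    finrank K (span K (Set.range (M ^ ·))) = Fintype.card ι := by
  refine Nat.pow_right_injective (Fintype.one_lt_card (α := K)) ?_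
  beta_reduce
  rw [← natCard_span_range_pow, ← ncard_insert_zero_image_pow hM, ← coe_span_range_pow hM]
  exact Nat.card_coe_set_eq _

lemma eq_zero_or_exists_eq_pow_of_mem_span (hM : orderOf M = Fintype.card K ^ Fintype.card ι - 1)
    {X : Matrix ι ι K} (hX : X ∈ span K (Set.range (M ^ ·))) : X = 0 ∨ ∃ i, X = M ^ i := by
  rw [← SetLike.mem_coe, coe_span_range_pow hM] at hX
  rcases hX with h | ⟨i, -, rfl⟩
  exacts [Or.inl h, Or.inr ⟨i, rfl⟩]

lemma isUnit_pow_sub_pow (hM : orderOf M = Fintype.card K ^ Fintype.card ι - 1) {a b : ℕ}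
    (hab : M ^ a ≠ M ^ b) : IsUnit (M ^ a - M ^ b) := by
  rcases eq_zero_or_exists_eq_pow_of_mem_span hM
    (sub_mem (subset_span ⟨a, rfl⟩) (subset_span ⟨b, rfl⟩)) with h | ⟨i, hi⟩
  · exact absurd (sub_eq_zero.mp h) hab
  · exact hi ▸ (isUnit_of_orderOf_eq hM).pow i

lemma exists_vecMul_pow_eq (hM : orderOf M = Fintype.card K ^ Fintype.card ι - 1) {v w : ι → K}
    (hv : v ≠ 0) (hw : w ≠ 0) : ∃ i, v ᵥ* M ^ i = w := by
  let f : span K (Set.range (M ^ ·)) →ₗ[K] ι → K :=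
    { toFun := fun X => v ᵥ* (X : Matrix ι ι K)
      map_add' := fun X Y => vecMul_add X.1 Y.1 v
      map_smul' := fun c X => vecMul_smul v c X.1 }
  have hf : Function.Injective f := by
    refine (injective_iff_map_eq_zero f).mpr fun X hX => ?_
    rcases eq_zero_or_exists_eq_pow_of_mem_span hM X.2 with h | ⟨i, hi⟩
    · exact Subtype.ext h
    · refine absurd (vecMul_injective_of_isUnit ((isUnit_of_orderOf_eq hM).pow i) ?_) hv
      simpa [f, hi] using hX
  have hfinrank : finrank K (span K (Set.range (M ^ ·))) = finrank K (ι → K) := by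
    rw [finrank_span_range_pow hM, finrank_fintype_fun_eq_card]
  obtain ⟨X, hX⟩ := (LinearMap.injective_iff_surjective_of_finrank_eq_finrank hfinrank).mp hf w
  rcases eq_zero_or_exists_eq_pow_of_mem_span hM X.2 with h | ⟨i, hi⟩
  · exact absurd (by simpa [f, h] using hX.symm) hw
  · exact ⟨i, by simpa [f, hi] using hX⟩

end SingerCycle

namespace Matrix

variable {K m n : Type*} [Field K] [Fintype m] [Fintype n]

lemma vecMul_injective_of_rank_eq {A : Matrix m n K} (h : A.rank = Fintype.card m) :
    Function.Injective A.vecMul :=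
  vecMul_injective_iff.mpr <| linearIndependent_iff_card_eq_finrank_span.mpr <| by
    rw [← h, rank_eq_finrank_span_row]; rfl

lemma finrank_ker_vecMulLinear (A : Matrix m n K) :
    finrank K (LinearMap.ker A.vecMulLinear) = Fintype.card m - A.rank := by
  have := LinearMap.finrank_range_add_finrank_ker A.vecMulLinear
  rw [range_vecMulLinear, ← rank_eq_finrank_span_row, finrank_fintype_fun_eq_card] at this
  omega

lemma exists_ne_zero_vecMul_eq_zero {A : Matrix m n K} (h : A.rank < Fintype.card m) :
    ∃ x, x ≠ 0 ∧ x ᵥ* A = 0 := by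
  obtain ⟨x, hx, hx0⟩ := Submodule.exists_mem_ne_zero_of_ne_bot
    (p := LinearMap.ker A.vecMulLinear) fun hbot => by
      have := finrank_ker_vecMulLinear A
      rw [hbot, finrank_bot] at this
      omega
  exact ⟨x, hx0, hx⟩

variable [DecidableEq m]

lemma isUnit_of_rank_eq {A : Matrix m m K} (h : A.rank = Fintype.card m) : IsUnit A :=
  vecMul_injective_iff_isUnit.mp (vecMul_injective_of_rank_eq h)

lemma vecMul_eq_iff_eq_vecMul_inv {A : Matrix m m K} (hA : IsUnit A) {x y : m → K} :
    x ᵥ* A = y ↔ x = y ᵥ* A⁻¹ := by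
  have hA := (isUnit_iff_isUnit_det A).mp hA
  constructor <;> rintro rfl
  · rw [vecMul_vecMul, mul_nonsing_inv _ hA, vecMul_one]
  · rw [vecMul_vecMul, nonsing_inv_mul _ hA, vecMul_one]

end Matrix

lemma dS_eq_of_finrank_eq {K V : Type*} [Field K] [AddCommGroup V] [Module K V]
    {U W : Submodule K V} [FiniteDimensional K U] [FiniteDimensional K W] {m : ℕ}
    (hU : finrank K U = m) (hW : finrank K W = m) :
    dS U W = 2 * (m - finrank K ↥(U ⊓ W)) := by
  have := Submodule.finrank_sup_add_finrank_inf_eq U W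
  unfold dS
  omega

section OrbitCode

variable {K : Type*} [Field K] {k : ℕ} {V1 : Matrix (Fin (k + 1)) (Fin k) K}
  {V2 M : Matrix (Fin (k + 1)) (Fin (k + 1)) K}

lemma spV_eq_range (i : ℕ) :
    spV V1 V2 M i = LinearMap.range (fromCols V1 (V2 * M ^ i)).vecMulLinear := by
  rw [range_vecMulLinear]
  rfl

lemma mem_spV {i : ℕ} {v : Fin k ⊕ Fin (k + 1) → K} :
    v ∈ spV V1 V2 M i ↔ ∃ x, Sum.elim (x ᵥ* V1) (x ᵥ* V2 ᵥ* M ^ i) = v := by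
  simp [spV_eq_range, vecMul_vecMul]

lemma injective_vecMul_fromCols_pow (hV : Function.Injective (fromCols V1 V2).vecMul)
    (hM : IsUnit M) (i : ℕ) : Function.Injective (fromCols V1 (V2 * M ^ i)).vecMul := by
  intro x y hxy
  simp only [vecMul_fromCols, Sum.elim_eq_iff, ← vecMul_vecMul] at hxy
  apply hV
  simp only [vecMul_fromCols, hxy.1, vecMul_injective_of_isUnit (hM.pow i) hxy.2]

lemma finrank_spV (hV : Function.Injective (fromCols V1 V2).vecMul) (hM : IsUnit M) (i : ℕ) :
    finrank K (spV V1 V2 M i) = k + 1 := by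
  rw [spV_eq_range, LinearMap.finrank_range_of_inj (injective_vecMul_fromCols_pow hV hM i),
    finrank_fin_fun]

lemma mem_spV_inf_of_vecMul_eq {i j : ℕ} {u y : Fin (k + 1) → K} (hu : u ᵥ* V1 = 0)
    (hy : y ᵥ* V2 ᵥ* (M ^ j - M ^ i) = u ᵥ* V2 ᵥ* M ^ j) :
    Sum.elim (y ᵥ* V1) (y ᵥ* V2 ᵥ* M ^ i) ∈ spV V1 V2 M i ⊓ spV V1 V2 M j := by
  refine ⟨mem_spV.mpr ⟨y, rfl⟩, mem_spV.mpr ⟨y - u, ?_⟩⟩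
  rw [sub_vecMul, hu, sub_zero, sub_vecMul, sub_vecMul, ← hy, vecMul_sub, sub_sub_cancel]

lemma sub_rank_le_finrank_spV_inf (hV : Function.Injective (fromCols V1 V2).vecMul) (i j : ℕ) :
    k + 1 - V2.rank ≤ finrank K ↥(spV V1 V2 M i ⊓ spV V1 V2 M j) := by
  have hmem : ∀ l, ∀ w ∈ LinearMap.ker V2.vecMulLinear,
      (fromCols V1 V2).vecMulLinear w ∈ spV V1 V2 M l := fun l w hw =>
    mem_spV.mpr ⟨w, by simp [show w ᵥ* V2 = 0 from hw]⟩
  calc k + 1 - V2.rank = finrank K (LinearMap.ker V2.vecMulLinear) := by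
        rw [finrank_ker_vecMulLinear, Fintype.card_fin]
    _ = finrank K ((LinearMap.ker V2.vecMulLinear).map (fromCols V1 V2).vecMulLinear) :=
        (equivMapOfInjective _ hV _).finrank_eq
    _ ≤ _ := finrank_mono <| by
        rintro _ ⟨w, hw, rfl⟩
        exact ⟨hmem i w hw, hmem j w hw⟩

lemma spV_inf_eq_map (hV2 : IsUnit V2) {i j : ℕ} (hD : IsUnit (M ^ j - M ^ i)) :
    spV V1 V2 M i ⊓ spV V1 V2 M j =
      (LinearMap.ker V1.vecMulLinear).map ((fromCols V1 (V2 * M ^ i)).vecMulLinear ∘ₗ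
        (V2 * M ^ j * (V2 * (M ^ j - M ^ i))⁻¹).vecMulLinear) := by
  have key : ∀ u y : Fin (k + 1) → K, y ᵥ* V2 ᵥ* (M ^ j - M ^ i) = u ᵥ* V2 ᵥ* M ^ j ↔
      y = u ᵥ* (V2 * M ^ j * (V2 * (M ^ j - M ^ i))⁻¹) := fun u y => by
    rw [vecMul_vecMul, vecMul_eq_iff_eq_vecMul_inv (hV2.mul hD), vecMul_vecMul, vecMul_vecMul,
      Matrix.mul_assoc]
  apply le_antisymm
  · rintro v ⟨hvi, hvj⟩
    obtain ⟨x, rfl⟩ := mem_spV.mp hvi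
    obtain ⟨z, hz⟩ := mem_spV.mp hvj
    rw [Sum.elim_eq_iff] at hz
    have hx : x = (x - z) ᵥ* (V2 * M ^ j * (V2 * (M ^ j - M ^ i))⁻¹) :=
      (key _ _).mp (by rw [vecMul_sub, sub_vecMul, sub_vecMul, hz.2])
    refine ⟨x - z, ?_, ?_⟩
    · change (x - z) ᵥ* V1 = 0
      rw [sub_vecMul, hz.1, sub_self]
    · simp only [LinearMap.comp_apply, vecMulLinear_apply, ← hx, vecMul_fromCols, vecMul_vecMul]
  · rintro _ ⟨u, hu, rfl⟩
    convert mem_spV_inf_of_vecMul_eq hu ((key u _).mpr rfl) using 1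
    rw [LinearMap.comp_apply, vecMulLinear_apply, vecMulLinear_apply, vecMul_fromCols,
      vecMul_vecMul _ V2]

lemma finrank_spV_inf (hV : Function.Injective (fromCols V1 V2).vecMul) (hM : IsUnit M)
    (hV2 : IsUnit V2) {i j : ℕ} (hD : IsUnit (M ^ j - M ^ i)) :
    finrank K ↥(spV V1 V2 M i ⊓ spV V1 V2 M j) = k + 1 - V1.rank := by
  have hC : IsUnit (V2 * M ^ j * (V2 * (M ^ j - M ^ i))⁻¹) :=
    (hV2.mul (hM.pow j)).mul (isUnit_nonsing_inv_iff.mpr (hV2.mul hD))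
  rw [spV_inf_eq_map hV2 hD, ← (equivMapOfInjective _ ?_ _).finrank_eq,
    finrank_ker_vecMulLinear, Fintype.card_fin]
  exact (injective_vecMul_fromCols_pow hV hM i).comp (vecMul_injective_of_isUnit hC)

lemma two_le_finrank_spV_zero_inf (hV : Function.Injective (fromCols V1 V2).vecMul) {i : ℕ}
    {u w y : Fin (k + 1) → K} (hw0 : w ≠ 0) (hw : w ᵥ* V2 = 0) (hu : u ᵥ* V1 = 0)
    (hy0 : y ᵥ* V2 ≠ 0) (hy : y ᵥ* V2 ᵥ* (M ^ i - 1) = u ᵥ* V2 ᵥ* M ^ i) :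
    2 ≤ finrank K ↥(spV V1 V2 M 0 ⊓ spV V1 V2 M i) := by
  have hwy : LinearIndependent K ![w, y] := LinearIndependent.pair_iff.mpr fun s t hst => by
    have ht : t = 0 := by simpa [add_vecMul, smul_vecMul, hw, hy0] using congrArg (· ᵥ* V2) hst
    subst ht
    simpa [hw0] using hst
  have hw' : (fromCols V1 V2).vecMulLinear w ∈ spV V1 V2 M 0 ⊓ spV V1 V2 M i :=
    ⟨mem_spV.mpr ⟨w, by simp [hw]⟩, mem_spV.mpr ⟨w, by simp [hw]⟩⟩
  have hy' : (fromCols V1 V2).vecMulLinear y ∈ spV V1 V2 M 0 ⊓ spV V1 V2 M i := by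
    convert mem_spV_inf_of_vecMul_eq (i := 0) hu (by simpa using hy) using 1
    simp
  calc 2 = finrank K (span K (Set.range ((fromCols V1 V2).vecMulLinear ∘ ![w, y]))) :=
        (finrank_span_eq_card (hwy.map' _ (LinearMap.ker_eq_bot.mpr hV))).symm
    _ ≤ _ := finrank_mono <| span_le.mpr <| Set.range_subset_iff.mpr <|
        Fin.forall_fin_two.mpr ⟨hw', hy'⟩

lemma exists_two_le_finrank_spV_zero_inf (hV : Function.Injective (fromCols V1 V2).vecMul)
    (hM : ∀ v w : Fin (k + 1) → K, v ≠ 0 → w ≠ 0 → ∃ i, v ᵥ* M ^ i = w)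
    (h2 : 2 ≤ V2.rank) (hlt : V2.rank < k + 1) :
    ∃ i, M ^ i ≠ 1 ∧ 2 ≤ finrank K ↥(spV V1 V2 M 0 ⊓ spV V1 V2 M i) := by
  obtain ⟨u, hu0, hu⟩ := exists_ne_zero_vecMul_eq_zero (A := V1)
    (by simpa using V1.rank_le_width.trans_lt k.lt_succ_self)
  obtain ⟨w, hw0, hw⟩ := exists_ne_zero_vecMul_eq_zero (A := V2) (by simpa using hlt)
  have hc : u ᵥ* V2 ≠ 0 := fun hc => hu0 (hV (by simp [hu, hc]))
  obtain ⟨_, ⟨y, rfl⟩, hyc⟩ := SetLike.not_le_iff_exists.mp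
    fun h : LinearMap.range V2.vecMulLinear ≤ K ∙ (u ᵥ* V2) => by
      have := finrank_mono h
      rw [range_vecMulLinear, ← rank_eq_finrank_span_row, finrank_span_singleton hc] at this
      omega
  rw [vecMulLinear_apply] at hyc
  have hy0 : y ᵥ* V2 ≠ 0 := fun h => hyc (h ▸ zero_mem _)
  have hyc' : y ᵥ* V2 - u ᵥ* V2 ≠ 0 :=
    sub_ne_zero.mpr fun h => hyc (by rw [h]; exact mem_span_singleton_self _)
  obtain ⟨i, hi⟩ := hM _ _ hyc' hy0
  refine ⟨i, fun h1 => hc ?_, two_le_finrank_spV_zero_inf hV hw0 hw hu hy0 ?_⟩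
  · rwa [h1, vecMul_one, sub_eq_self] at hi
  · rw [vecMul_sub, vecMul_one, sub_eq_iff_eq_add']
    conv_rhs => rw [← hi]
    rw [sub_vecMul, sub_add_cancel]

end OrbitCode

section Primitive

open SingerCycle

variable {K : Type*} [Field K] [Fintype K] {k : ℕ} {V1 : Matrix (Fin (k + 1)) (Fin k) K}
  {V2 M : Matrix (Fin (k + 1)) (Fin (k + 1)) K}

lemma rank_eq_of_finrank_spV_zero_inf_eq_one (hV : Function.Injective (fromCols V1 V2).vecMul)
    (hM : orderOf M = Fintype.card K ^ (k + 1) - 1) (hk : 2 ≤ k)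
    (h : ∀ i, M ^ i ≠ 1 → finrank K ↥(spV V1 V2 M 0 ⊓ spV V1 V2 M i) = 1) :
    V1.rank = k ∧ V2.rank = k + 1 := by
  replace hM : orderOf M = Fintype.card K ^ Fintype.card (Fin (k + 1)) - 1 := by
    rwa [Fintype.card_fin]
  have hM1 : M ^ 1 ≠ 1 := by
    rw [pow_one]
    exact ne_one_of_orderOf_eq hM (by rw [Fintype.card_fin]; omega)
  have hV2 : V2.rank = k + 1 := by
    by_contra hne
    obtain ⟨i, hi, h2⟩ :
        ∃ i, M ^ i ≠ 1 ∧ 2 ≤ finrank K ↥(spV V1 V2 M 0 ⊓ spV V1 V2 M i) := by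
      rcases Nat.lt_or_ge V2.rank k with hlt | hge
      · exact ⟨1, hM1, (sub_rank_le_finrank_spV_inf hV 0 1).trans' (by omega)⟩
      · exact exists_two_le_finrank_spV_zero_inf hV (fun _ _ => exists_vecMul_pow_eq hM)
          (by omega) (by have := V2.rank_le_width; omega)
    have := h i hi
    omega
  have hinf := finrank_spV_inf hV (isUnit_of_orderOf_eq hM) (isUnit_of_rank_eq (by simpa using hV2))
    (isUnit_pow_sub_pow hM (a := 1) (b := 0) (by rwa [pow_zero]))
  have := h 1 hM1
  have := V1.rank_le_width
  exact ⟨by omega, hV2⟩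

lemma finrank_spV_inf_eq_one (hV : Function.Injective (fromCols V1 V2).vecMul)
    (hM : orderOf M = Fintype.card K ^ (k + 1) - 1) (hV1 : V1.rank = k) (hV2 : V2.rank = k + 1)
    {i j : ℕ} (hij : M ^ i ≠ M ^ j) : finrank K ↥(spV V1 V2 M i ⊓ spV V1 V2 M j) = 1 := by
  replace hM : orderOf M = Fintype.card K ^ Fintype.card (Fin (k + 1)) - 1 := by
    rwa [Fintype.card_fin]
  rw [finrank_spV_inf hV (isUnit_of_orderOf_eq hM) (isUnit_of_rank_eq (by simpa using hV2))
    (isUnit_pow_sub_pow hM hij.symm), hV1]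
  omega

end Primitive

theorem stmt17_general {K : Type*} [Field K] [Fintype K] {q k : ℕ}
    (hq : Fintype.card K = q) (hk : 1 < k)
    (M : Matrix (Fin (k + 1)) (Fin (k + 1)) K)
    (horder : orderOf M = q ^ (k + 1) - 1)
    (V1 : Matrix (Fin (k + 1)) (Fin k) K) (V2 : Matrix (Fin (k + 1)) (Fin (k + 1)) K)
    (hrank : (Matrix.of fun i => Sum.elim (V1 i) (V2 i) :
        Matrix (Fin (k + 1)) (Fin k ⊕ Fin (k + 1)) K).rank = k + 1) :
    ((∀ i j : ℕ, spV V1 V2 M i ≠ spV V1 V2 M j →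
        dS (spV V1 V2 M i) (spV V1 V2 M j) = 2 * k) ∧
     (∀ i : ℕ, M ^ i ≠ 1 → spV V1 V2 M i ≠ spV V1 V2 M 0)) ↔
      (V1.rank = k ∧ V2.rank = k + 1) := by
  subst hq
  have hV : Function.Injective (fromCols V1 V2).vecMul :=
    vecMul_injective_of_rank_eq (by rw [Fintype.card_fin]; exact hrank)
  have hM : IsUnit M := SingerCycle.isUnit_of_orderOf_eq (by rwa [Fintype.card_fin])
  have hdS : ∀ i j, dS (spV V1 V2 M i) (spV V1 V2 M j) = 2 * k ↔
      finrank K ↥(spV V1 V2 M i ⊓ spV V1 V2 M j) = 1 := fun i j => by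
    rw [dS_eq_of_finrank_eq (finrank_spV hV hM i) (finrank_spV hV hM j)]
    omega
  constructor
  · rintro ⟨hdist, hstab⟩
    exact rank_eq_of_finrank_spV_zero_inf_eq_one hV horder hk fun i hi =>
      (hdS 0 i).mp (hdist 0 i (hstab i hi).symm)
  · rintro ⟨hV1, hV2⟩
    refine ⟨fun i j hne => (hdS i j).mpr ?_, fun i hi heq => ?_⟩
    · exact finrank_spV_inf_eq_one hV horder hV1 hV2 fun h => hne (by simp only [spV, h])
    · have := finrank_spV_inf_eq_one hV horder hV1 hV2 (i := i) (j := 0) (by rwa [pow_zero])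
      rw [heq, inf_idem, finrank_spV hV hM] at this
      omega

/-- Let `M` be the companion matrix of a primitive polynomial of degree `k+1` over `F_q`, with
`k > 1`, and `V = rowspace(V_1 | V_2)` with `rk(V_1 | V_2) = k + 1`. The orbit code of `V`
under `G = ⟨diag(I_k, M)⟩` attains the maximum distance `2k` (all distinct pairs are at
distance `2k` and the stabilizer is trivial) if and only if `rk(V_1) = k` and
`rk(V_2) = k + 1`. -/
theorem stmt17 {K : Type*} [Field K] [Fintype K] {q k : ℕ}
    (hq : Fintype.card K = q) (hk : 1 < k)
    (p : Polynomial K) (hmonic : p.Monic) (hdeg : p.natDegree = k + 1)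
    (M : Matrix (Fin (k + 1)) (Fin (k + 1)) K) (hM : M = companion p)
    (horder : orderOf M = q ^ (k + 1) - 1)
    (V1 : Matrix (Fin (k + 1)) (Fin k) K) (V2 : Matrix (Fin (k + 1)) (Fin (k + 1)) K)
    (hrank : (Matrix.of fun i => Sum.elim (V1 i) (V2 i) :
        Matrix (Fin (k + 1)) (Fin k ⊕ Fin (k + 1)) K).rank = k + 1) :
    ((∀ i j : ℕ, spV V1 V2 M i ≠ spV V1 V2 M j →
        dS (spV V1 V2 M i) (spV V1 V2 M j) = 2 * k) ∧
     (∀ i : ℕ, M ^ i ≠ 1 → spV V1 V2 M i ≠ spV V1 V2 M 0)) ↔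
      (V1.rank = k ∧ V2.rank = k + 1) :=
  stmt17_general hq hk M horder V1 V2 hrank
end

section
/- With G as above and U = rowspace(U_1 | U_2), rk(U_1) = rk(U_2) = k, define U' = rowspace(U_1 | 0) and U'' = rowspace(0 | U_2). Then Orb_G(U) ∪ {U', U''} is a partial spread of dimension k of F_q^{2k+1} of cardinality q^{k+1} + 1, i.e. any two distinct members intersect trivially. -/
open Module

/-- The orbit of `rowspace(U_1 | U_2)` under the group `G = {diag(I_k, M^i)}`. -/
def orbitSet {K : Type*} [Field K] {k : ℕ}
    (U1 : Matrix (Fin k) (Fin k) K) (U2 : Matrix (Fin k) (Fin (k + 1)) K)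
    (M : Matrix (Fin (k + 1)) (Fin (k + 1)) K) :
    Set (Submodule K (Fin k ⊕ Fin (k + 1) → K)) :=
  {W | ∃ i : ℕ, W = Submodule.span K
      (Set.range fun r => Sum.elim (U1 r) (Matrix.vecMul (U2 r) (M ^ i)))}

open Matrix Set Submodule

/-!
Let `n = k + 1`. By Cayley–Hamilton, `K[M]` is spanned by `1, M, …, M^(n-1)`, so it has at most
`q^n` elements; it contains `0` and the `q^n - 1` distinct powers of the Singer cycle `M`, so it
consists of exactly these. Hence every nonzero element of `K[M]` (in particular every difference
`M^i - M^j`, and every `M^i`) is invertible, and `v M^i = v M^j` with `v ≠ 0` forces `M^i = M^j`.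

Writing `F g = rowspace(U_1 | U_2 g)`, the code is `{F g | g ∈ K[M]} ∪ {U''}` with `U' = F 0`.
Since `U_1` has full row rank, a common vector of `F g` and `F h` comes from one coefficient
vector `c`, and then `c U_2 (g - h) = 0` gives `c = 0`. Likewise a common vector of `F g` and `U''`
has `c U_1 = 0`. All members have dimension `k > 0`, so they are pairwise distinct and the code has
`|K[M]| + 1 = q^n + 1` members.
-/

theorem ncard_insert_zero_powers {A : Type*} [MonoidWithZero A] [Nontrivial A] {a : A}
    (ha : 0 < orderOf a) :
    (insert 0 (Submonoid.powers a : Set A)).ncard = orderOf a + 1 := by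
  classical
  have hfin : IsOfFinOrder a := orderOf_pos_iff.mp ha
  have hzero : (0 : A) ∉ (Submonoid.powers a : Set A) := by
    rintro ⟨i, hi⟩
    exact (hfin.isUnit.pow i).ne_zero hi
  rw [Set.ncard_insert_of_notMem hzero hfin.finite_powers, hfin.powers_eq_image_range_orderOf,
    Set.ncard_coe_finset, Finset.card_image_of_injOn, Finset.card_range]
  simpa [Finset.coe_range] using pow_injOn_Iio_orderOf

theorem Submodule.coe_eq_insert_zero_powers {K A : Type*} [Field K] [Fintype K] [Ring A]
    [Nontrivial A] [Finite A] [Module K A] {S : Submodule K A} {a : A} {d : ℕ} (hd : 0 < d)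
    (hS : finrank K S ≤ d) (hpow : ∀ i : ℕ, a ^ i ∈ S)
    (ha : orderOf a = Fintype.card K ^ d - 1) :
    (S : Set A) = insert 0 (Submonoid.powers a : Set A) := by
  have hq : 1 < Fintype.card K ^ d := Nat.one_lt_pow hd.ne' Fintype.one_lt_card
  refine (Set.eq_of_subset_of_ncard_le ?_ ?_ (Set.toFinite _)).symm
  · rintro _ (rfl | ⟨i, rfl⟩)
    exacts [S.zero_mem, hpow i]
  · calc (S : Set A).ncard = Fintype.card K ^ finrank K S := by
          rw [← Nat.card_coe_set_eq, SetLike.coe_sort_coe, Module.natCard_eq_pow_finrank (K := K),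
            Nat.card_eq_fintype_card]
      _ ≤ Fintype.card K ^ d := Nat.pow_le_pow_right Fintype.card_pos hS
      _ = _ := by rw [ncard_insert_zero_powers (by omega), ha]; omega

section Singer

variable {K n : Type*} [Field K] [Fintype n] [DecidableEq n]

theorem Matrix.pow_mem_span_pow_lt_card (M : Matrix n n K) (i : ℕ) :
    M ^ i ∈ span K (range fun j : Fin (Fintype.card n) => M ^ (j : ℕ)) := by
  refine PowerBasis.mem_span_pow'.mpr ⟨Polynomial.X ^ i %ₘ M.charpoly, ?_, ?_⟩
  · rw [← M.charpoly_degree_eq_dim]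
    exact Polynomial.degree_modByMonic_lt _ M.charpoly_monic
  · rw [Polynomial.aeval_modByMonic_eq_self_of_root M.aeval_self_charpoly]
    simp

variable [Fintype K] [Nonempty n] {M : Matrix n n K}

theorem Matrix.coe_span_pow_eq_insert_zero_powers
    (hM : orderOf M = Fintype.card K ^ Fintype.card n - 1) :
    (span K (range fun j : Fin (Fintype.card n) => M ^ (j : ℕ)) : Set (Matrix n n K)) =
      insert 0 (Submonoid.powers M : Set (Matrix n n K)) :=
  Submodule.coe_eq_insert_zero_powers Fintype.card_pos
    ((finrank_range_le_card _).trans_eq (Fintype.card_fin _)) (pow_mem_span_pow_lt_card M) hM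

theorem Matrix.eq_zero_of_vecMul_eq_vecMul
    (hM : orderOf M = Fintype.card K ^ Fintype.card n - 1) {g h : Matrix n n K}
    (hg : g ∈ insert 0 (Submonoid.powers M : Set (Matrix n n K)))
    (hh : h ∈ insert 0 (Submonoid.powers M : Set (Matrix n n K))) (hgh : g ≠ h) {v : n → K}
    (hv : v ᵥ* g = v ᵥ* h) : v = 0 := by
  have hK := coe_span_pow_eq_insert_zero_powers hM
  rw [← hK] at hg hh
  have hsub : g - h ∈ (span K (range fun j : Fin (Fintype.card n) => M ^ (j : ℕ)) : Set _) :=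
    sub_mem hg hh
  rw [hK] at hsub
  obtain hzero | ⟨i, hi⟩ := hsub
  · exact absurd (sub_eq_zero.mp hzero) hgh
  · have hpos : 0 < orderOf M := by
      have := Nat.one_lt_pow (Fintype.card_ne_zero (α := n)) (Fintype.one_lt_card (α := K))
      omega
    have hunit : IsUnit (g - h) := hi ▸ (orderOf_pos_iff.mp hpos).isUnit.pow i
    exact vecMul_injective_of_isUnit hunit (by simp [vecMul_sub, hv])

end Singer

section BlockRows

variable {K m n₁ n₂ : Type*} [Field K] [Fintype m]

theorem Matrix.vecMul_injective_of_rank_eq_card {n : Type*} [Fintype n] {A : Matrix m n K}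
    (h : A.rank = Fintype.card m) : Function.Injective A.vecMul :=
  vecMul_injective_iff.mpr <| linearIndependent_iff_card_eq_finrank_span.mpr <| by
    rw [← h, rank_eq_finrank_span_row, Set.finrank]

theorem Matrix.mem_span_range_fromCols {A : Matrix m n₁ K} {B : Matrix m n₂ K}
    {w : n₁ ⊕ n₂ → K} :
    w ∈ span K (range (fromCols A B)) ↔ ∃ c, Sum.elim (c ᵥ* A) (c ᵥ* B) = w := by
  change w ∈ span K (range (fromCols A B).row) ↔ _
  simp [← range_vecMulLinear, vecMul_fromCols]

theorem Matrix.finrank_span_range_fromCols {A : Matrix m n₁ K} {B : Matrix m n₂ K}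
    (h : Function.Injective A.vecMul ∨ Function.Injective B.vecMul) :
    finrank K (span K (range (fromCols A B))) = Fintype.card m := by
  refine finrank_span_eq_card (b := (fromCols A B).row)
    (vecMul_injective_iff.mp fun c c' hcc' => ?_)
  simp only [vecMul_fromCols, Sum.elim_eq_iff] at hcc'
  exact h.elim (· hcc'.1) (· hcc'.2)

theorem Matrix.disjoint_span_range_fromCols {A : Matrix m n₁ K} {B B' : Matrix m n₂ K}
    (hA : Function.Injective A.vecMul) (hB : ∀ c, c ᵥ* B = c ᵥ* B' → c = 0) :
    Disjoint (span K (range (fromCols A B))) (span K (range (fromCols A B'))) := by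
  rw [disjoint_def]
  rintro _ hw hw'
  obtain ⟨c, rfl⟩ := mem_span_range_fromCols.mp hw
  obtain ⟨c', hc'⟩ := mem_span_range_fromCols.mp hw'
  rw [Sum.elim_eq_iff] at hc'
  obtain rfl : c' = c := hA hc'.1
  simp [hB c' hc'.2.symm]

theorem Matrix.disjoint_span_range_fromCols_zero {A : Matrix m n₁ K} {B B' : Matrix m n₂ K}
    (hA : Function.Injective A.vecMul) :
    Disjoint (span K (range (fromCols 0 B'))) (span K (range (fromCols A B))) := by
  rw [disjoint_def]
  rintro _ hw' hw
  obtain ⟨c, rfl⟩ := mem_span_range_fromCols.mp hw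
  obtain ⟨c', hc'⟩ := mem_span_range_fromCols.mp hw'
  rw [Sum.elim_eq_iff, vecMul_zero] at hc'
  simp [hA.eq_iff' (zero_vecMul A) |>.mp hc'.1.symm]

end BlockRows

/-- `rowspace(A | B g)`: the orbit members are `rowspaceMul U₁ U₂ (M ^ i)` and
`U' = rowspaceMul U₁ U₂ 0`. -/
def Matrix.rowspaceMul {K m n₁ n : Type*} [Field K] [Fintype n] (A : Matrix m n₁ K)
    (B : Matrix m n K) (g : Matrix n n K) : Submodule K (n₁ ⊕ n → K) :=
  span K (range (fromCols A (B * g)))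

theorem Matrix.pairwiseDisjoint_rowspaceMul {K m n₁ n : Type*} [Field K] [Fintype K]
    [Fintype m] [Fintype n] [DecidableEq n] [Nonempty n] {M : Matrix n n K}
    (hM : orderOf M = Fintype.card K ^ Fintype.card n - 1) {A : Matrix m n₁ K} {B : Matrix m n K}
    (hA : Function.Injective A.vecMul) (hB : Function.Injective B.vecMul) :
    (insert 0 (Submonoid.powers M : Set (Matrix n n K))).PairwiseDisjoint (rowspaceMul A B) :=
  fun g hg h hh hgh =>
  disjoint_span_range_fromCols hA fun c hc =>
    hB ((eq_zero_of_vecMul_eq_vecMul hM hg hh hgh (v := c ᵥ* B)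
      (by rwa [vecMul_vecMul, vecMul_vecMul])).trans (zero_vecMul B).symm)

section Lattice

variable {α ι : Type*} [PartialOrder α] [OrderBot α] {s : Set ι} {f : ι → α} {a : α}

theorem Set.PairwiseDisjoint.injOn_of_ne_bot (hs : s.PairwiseDisjoint f)
    (hf : ∀ i ∈ s, f i ≠ ⊥) : s.InjOn f := fun i hi _ hj hij =>
  by_contra fun hne => (hs hi hj hne).ne (hf i hi) hij

theorem Set.PairwiseDisjoint.pairwise_disjoint_insert_image (hs : s.PairwiseDisjoint f)
    (ha : ∀ i ∈ s, Disjoint a (f i)) : (insert a (f '' s)).Pairwise Disjoint :=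
  Set.pairwise_insert_of_symm.mpr ⟨hs.image, forall_mem_image.2 fun i hi _ => ha i hi⟩

theorem Set.PairwiseDisjoint.ncard_insert_image (hs : s.PairwiseDisjoint f) (hfin : s.Finite)
    (ha : ∀ i ∈ s, Disjoint a (f i)) (hne : ∀ b ∈ insert a (f '' s), b ≠ ⊥) :
    (insert a (f '' s)).ncard = s.ncard + 1 := by
  have hinj := hs.injOn_of_ne_bot fun i hi => hne _ (.inr ⟨i, hi, rfl⟩)
  have ha' : a ∉ f '' s := by
    rintro ⟨i, hi, rfl⟩
    exact (ha i hi).ne (hne _ (.inl rfl)) rfl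
  rw [Set.ncard_insert_of_notMem ha' (hfin.image f), hinj.ncard_image]

end Lattice

theorem orbitSet_union_eq_insert_image {K : Type*} [Field K] {k : ℕ}
    (U1 : Matrix (Fin k) (Fin k) K) (U2 : Matrix (Fin k) (Fin (k + 1)) K)
    (M : Matrix (Fin (k + 1)) (Fin (k + 1)) K) :
    orbitSet U1 U2 M ∪
        {span K (range fun r => Sum.elim (U1 r) (0 : Fin (k + 1) → K)),
         span K (range fun r => Sum.elim (0 : Fin k → K) (U2 r))} =
      insert (span K (range (fromCols 0 U2)))
        (rowspaceMul U1 U2 '' insert 0 (Submonoid.powers M : Set _)) := by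
  have horbit : orbitSet U1 U2 M = rowspaceMul U1 U2 '' (Submonoid.powers M : Set _) := by
    ext W
    constructor
    · rintro ⟨i, rfl⟩
      exact ⟨M ^ i, ⟨i, rfl⟩, rfl⟩
    · rintro ⟨_, ⟨i, rfl⟩, rfl⟩
      exact ⟨i, rfl⟩
  have hU' : span K (range fun r => Sum.elim (U1 r) (0 : Fin (k + 1) → K)) =
      rowspaceMul U1 U2 0 := by
    rw [rowspaceMul, Matrix.mul_zero]
    rfl
  rw [horbit, hU', Set.image_insert_eq, Set.union_insert, Set.union_singleton, Set.insert_comm]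
  rfl

theorem stmt18_general {K : Type*} [Field K] [Fintype K] {q k : ℕ}
    (hq : Fintype.card K = q) (hk : 0 < k)
    (M : Matrix (Fin (k + 1)) (Fin (k + 1)) K)
    (horder : orderOf M = q ^ (k + 1) - 1)
    (U1 : Matrix (Fin k) (Fin k) K) (U2 : Matrix (Fin k) (Fin (k + 1)) K)
    (hU1 : U1.rank = k) (hU2 : U2.rank = k) :
    ∀ C : Set (Submodule K (Fin k ⊕ Fin (k + 1) → K)),
      C = orbitSet U1 U2 M ∪
        {Submodule.span K (Set.range fun r => Sum.elim (U1 r) (0 : Fin (k + 1) → K)),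
         Submodule.span K (Set.range fun r => Sum.elim (0 : Fin k → K) (U2 r))} →
      ((∀ W ∈ C, finrank K ↥W = k) ∧
       (∀ W ∈ C, ∀ W' ∈ C, W ≠ W' → W ⊓ W' = ⊥) ∧
       C.ncard = q ^ (k + 1) + 1) := by
  subst hq
  rintro C rfl
  rw [orbitSet_union_eq_insert_image]
  have hU1' := vecMul_injective_of_rank_eq_card (hU1.trans (Fintype.card_fin k).symm)
  have hU2' := vecMul_injective_of_rank_eq_card (hU2.trans (Fintype.card_fin k).symm)
  have hdisj := pairwiseDisjoint_rowspaceMul (by simpa using horder) hU1' hU2'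
  have hU'' : ∀ g ∈ insert 0 (Submonoid.powers M : Set _),
      Disjoint (span K (range (fromCols 0 U2))) (rowspaceMul U1 U2 g) :=
    fun _ _ => disjoint_span_range_fromCols_zero hU1'
  have hfinrank : ∀ W ∈ insert (span K (range (fromCols 0 U2)))
      (rowspaceMul U1 U2 '' insert 0 (Submonoid.powers M : Set _)), finrank K W = k := by
    rintro _ (rfl | ⟨g, -, rfl⟩)
    · exact (finrank_span_range_fromCols (.inr hU2')).trans (Fintype.card_fin k)
    · exact (finrank_span_range_fromCols (.inl hU1')).trans (Fintype.card_fin k)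
  refine ⟨hfinrank, fun W hW W' hW' hne =>
    disjoint_iff.mp (hdisj.pairwise_disjoint_insert_image hU'' hW hW' hne), ?_⟩
  have hq : 1 < Fintype.card K ^ (k + 1) := Nat.one_lt_pow k.succ_ne_zero Fintype.one_lt_card
  rw [hdisj.ncard_insert_image (Set.toFinite _) hU''
      fun W hW hbot => hk.ne' (by rw [← hfinrank W hW, hbot, finrank_bot]),
    ncard_insert_zero_powers (by omega), horder]
  omega

/-- Let `M` be the companion matrix of a primitive polynomial of degree `k+1` over `F_q`, and
`U = rowspace(U_1 | U_2)` with `rk(U_1) = rk(U_2) = k`. With `U' = rowspace(U_1 | 0)` and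
`U'' = rowspace(0 | U_2)`, the code `Orb_G(U) ∪ {U', U''}` is a partial spread of dimension
`k` of `F_q^{2k+1}` of cardinality `q^{k+1} + 1`. -/
theorem stmt18 {K : Type*} [Field K] [Fintype K] {q k : ℕ}
    (hq : Fintype.card K = q) (hk : 0 < k)
    (p : Polynomial K) (hmonic : p.Monic) (hdeg : p.natDegree = k + 1)
    (M : Matrix (Fin (k + 1)) (Fin (k + 1)) K) (hM : M = companion p)
    (horder : orderOf M = q ^ (k + 1) - 1)
    (U1 : Matrix (Fin k) (Fin k) K) (U2 : Matrix (Fin k) (Fin (k + 1)) K)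
    (hU1 : U1.rank = k) (hU2 : U2.rank = k) :
    ∀ C : Set (Submodule K (Fin k ⊕ Fin (k + 1) → K)),
      C = orbitSet U1 U2 M ∪
        {Submodule.span K (Set.range fun r => Sum.elim (U1 r) (0 : Fin (k + 1) → K)),
         Submodule.span K (Set.range fun r => Sum.elim (0 : Fin k → K) (U2 r))} →
      ((∀ W ∈ C, finrank K ↥W = k) ∧
       (∀ W ∈ C, ∀ W' ∈ C, W ≠ W' → W ⊓ W' = ⊥) ∧
       C.ncard = q ^ (k + 1) + 1) :=
  stmt18_general hq hk M horder U1 U2 hU1 hU2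
end

section
/- Every optimum distance flag code C of type (t_1,…,t_r) on F_q^n with t_i = k for some i, where k divides n, satisfies |C| ≤ (q^n - 1)/(q^k - 1), with equality if and only if the projected code C_i is a k-spread of F_q^n. -/
open Module

/-- Every optimum distance flag code `C` of type `(t_1,…,t_r)` on `F_q^n` with `t_i = k` for
some `i`, where `k` divides `n`, satisfies `|C| ≤ (q^n - 1)/(q^k - 1)`, with equality if and
only if the projected code `C_i` is a `k`-spread of `F_q^n`. -/
theorem stmt19 {K : Type*} [Field K] [Fintype K] {q n r k : ℕ} {t : Fin r → ℕ}
    (hq : Fintype.card K = q)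
    (C : Set (Fin r → Submodule K (Fin n → K))) (hCne : C.Nonempty)
    (hpos : ∀ j, 0 < t j) (hlt : ∀ j, t j < n) (hstrict : StrictMono t)
    (hdim : ∀ F ∈ C, ∀ j, finrank K ↥(F j) = t j)
    (hnested : ∀ F ∈ C, Monotone F)
    (i : Fin r) (hti : t i = k) (hk : 0 < k) (hkn : k ∣ n)
    (hodfc : flagMinDist C = 2 * ∑ j, (if 2 * t j ≤ n then t j else n - t j)) :
    C.ncard ≤ (q ^ n - 1) / (q ^ k - 1) ∧
    (C.ncard = (q ^ n - 1) / (q ^ k - 1) ↔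
      ((∀ U ∈ (fun F => F i) '' C, ∀ V ∈ (fun F => F i) '' C, U ≠ V → U ⊓ V = ⊥) ∧
       (∀ v : Fin n → K, ∃ U ∈ (fun F => F i) '' C, v ∈ U))) := by
  classical
  -- basic numerics
  have hq2 : 2 ≤ q := by
    have := Fintype.one_lt_card (α := K)
    omega
  obtain ⟨m, hm⟩ := hkn
  have hm2 : 2 ≤ m := by
    have := hlt i
    rw [hti] at this
    rcases Nat.lt_or_ge m 2 with h | h
    · interval_cases m <;> omega
    · exact h
  have h2k : 2 * k ≤ n := by
    calc 2 * k = k * 2 := by ring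
    _ ≤ k * m := Nat.mul_le_mul_left k hm2
    _ = n := hm.symm
  have hqk1 : 1 ≤ q ^ k - 1 := by
    have : 2 ≤ q ^ k := le_trans (by omega) (Nat.le_self_pow (by omega) q)
    omega
  -- key: distinct codewords have trivially intersecting i-th components
  have key : ∀ F ∈ C, ∀ F' ∈ C, F ≠ F' → F i ⊓ F' i = ⊥ := by
    intro F hF F' hF' hne
    have hd : (∑ j, dS (F j) (F' j)) ∈
        {d | ∃ F ∈ C, ∃ F' ∈ C, F ≠ F' ∧ d = ∑ i, dS (F i) (F' i)} :=
      ⟨F, hF, F', hF', hne, rfl⟩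
    have hle : flagMinDist C ≤ ∑ j, dS (F j) (F' j) := Nat.sInf_le hd
    rw [hodfc, Finset.mul_sum] at hle
    have hb : ∀ j, dS (F j) (F' j) ≤ 2 * (if 2 * t j ≤ n then t j else n - t j) := by
      intro j
      have h1 := Submodule.finrank_sup_add_finrank_inf_eq (F j) (F' j)
      rw [hdim F hF j, hdim F' hF' j] at h1
      have h2 : finrank K ↥(F j ⊔ F' j) ≤ n := by
        have := Submodule.finrank_le (F j ⊔ F' j)
        rwa [Module.finrank_fin_fun] at this
      unfold dS
      split_ifs <;> omega
    have heq : ∀ j ∈ Finset.univ, dS (F j) (F' j) = (2 * if 2 * t j ≤ n then t j else n - t j) := by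
      refine (Finset.sum_eq_sum_iff_of_le (fun j _ => hb j)).mp ?_
      exact le_antisymm (Finset.sum_le_sum fun j _ => hb j) hle
    have hi := heq i (Finset.mem_univ i)
    rw [if_pos (by rw [hti]; exact h2k), hti] at hi
    have h1 := Submodule.finrank_sup_add_finrank_inf_eq (F i) (F' i)
    rw [hdim F hF i, hdim F' hF' i, hti] at h1
    have h0 : finrank K ↥(F i ⊓ F' i) = 0 := by
      unfold dS at hi
      have h2 : finrank K ↥(F i ⊓ F' i) ≤ finrank K ↥(F i ⊔ F' i) := by omega
      omega
    exact Submodule.finrank_eq_zero.mp h0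
  -- injectivity of the projection on C
  have hinj : Set.InjOn (fun F => F i) C := by
    intro F hF F' hF' h
    by_contra hne
    have hbot := key F hF F' hF' hne
    simp only at h
    rw [h, inf_idem] at hbot
    have : finrank K ↥(F' i) = 0 := by rw [hbot]; exact finrank_bot K _
    rw [hdim F' hF' i, hti] at this
    omega
  set S : Set (Submodule K (Fin n → K)) := (fun F => F i) '' C with hS
  have hpair : ∀ U ∈ S, ∀ V ∈ S, U ≠ V → U ⊓ V = ⊥ := by
    rintro U ⟨F, hF, rfl⟩ V ⟨F', hF', rfl⟩ hUV
    exact key F hF F' hF' (fun h => hUV (by rw [h]))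
  haveI : Finite (Submodule K (Fin n → K)) :=
    Finite.of_injective (fun p => (p : Set (Fin n → K))) SetLike.coe_injective
  have hSfin : S.Finite := Set.toFinite S
  have hCfin : C.Finite := Set.Finite.of_finite_image hSfin hinj
  have hcardeq : C.ncard = S.ncard := (Set.ncard_image_of_injOn hinj).symm
  set T : Finset (Submodule K (Fin n → K)) := hSfin.toFinset with hT
  have hTcard : S.ncard = T.card := Set.ncard_eq_toFinset_card S hSfin
  -- the nonzero-vector finsets
  set B : Submodule K (Fin n → K) → Finset (Fin n → K) :=
    fun U => (Finset.univ.filter (fun v => v ∈ U)).erase 0 with hB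
  have hBcard : ∀ U ∈ T, (B U).card = q ^ k - 1 := by
    intro U hU
    have hUS : U ∈ S := (Set.Finite.mem_toFinset hSfin).mp hU
    obtain ⟨F, hF, rfl⟩ := hUS
    have hcard : (Finset.univ.filter (fun v => v ∈ F i)).card = q ^ k := by
      rw [← Fintype.card_subtype, ← hq, card_eq_pow_finrank (K := K) (V := ↥(F i)),
        hdim F hF i, hti]
    rw [hB]
    rw [Finset.card_erase_of_mem (by simp [Submodule.zero_mem]), hcard]
  have hdisj : ∀ U ∈ T, ∀ V ∈ T, U ≠ V → Disjoint (B U) (B V) := by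
    intro U hU V hV hUV
    refine Finset.disjoint_left.mpr ?_
    intro v hvU hvV
    have hUS : U ∈ S := (Set.Finite.mem_toFinset hSfin).mp hU
    have hVS : V ∈ S := (Set.Finite.mem_toFinset hSfin).mp hV
    have hbot := hpair U hUS V hVS hUV
    simp only [hB, Finset.mem_erase, Finset.mem_filter] at hvU hvV
    have : v ∈ U ⊓ V := ⟨hvU.2.2, hvV.2.2⟩
    rw [hbot] at this
    exact hvU.1 (by simpa using this)
  have hbiU : (T.biUnion B).card = T.card * (q ^ k - 1) := by
    rw [Finset.card_biUnion hdisj]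
    rw [Finset.sum_congr rfl hBcard, Finset.sum_const, smul_eq_mul]
  have hsub : T.biUnion B ⊆ Finset.univ.erase 0 := by
    intro v hv
    obtain ⟨U, _, hvU⟩ := Finset.mem_biUnion.mp hv
    simp only [hB, Finset.mem_erase, Finset.mem_filter] at hvU
    exact Finset.mem_erase.mpr ⟨hvU.1, Finset.mem_univ v⟩
  have huniv : (Finset.univ.erase (0 : Fin n → K)).card = q ^ n - 1 := by
    rw [Finset.card_erase_of_mem (Finset.mem_univ 0), Finset.card_univ]
    congr 1
    rw [← hq, card_eq_pow_finrank (K := K) (V := Fin n → K), Module.finrank_fin_fun]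
  have hmain : T.card * (q ^ k - 1) ≤ q ^ n - 1 := by
    rw [← hbiU, ← huniv]
    exact Finset.card_le_card hsub
  have hdvd : q ^ k - 1 ∣ q ^ n - 1 := by
    have := Nat.sub_dvd_pow_sub_pow (q ^ k) 1 m
    rwa [← pow_mul, one_pow, ← hm] at this
  constructor
  · rw [hcardeq, hTcard]
    exact (Nat.le_div_iff_mul_le (by omega)).mpr hmain
  · constructor
    · -- equality → spread
      intro hcard
      refine ⟨hpair, ?_⟩
      have hTc : T.card * (q ^ k - 1) = q ^ n - 1 := by
        rw [hcardeq, hTcard] at hcard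
        rw [hcard, Nat.div_mul_cancel hdvd]
      have hequ : T.biUnion B = Finset.univ.erase 0 :=
        Finset.eq_of_subset_of_card_le hsub (by rw [huniv, hbiU, hTc])
      intro v
      by_cases hv : v = 0
      · obtain ⟨F, hF⟩ := hCne
        exact ⟨F i, ⟨F, hF, rfl⟩, hv ▸ Submodule.zero_mem _⟩
      · have : v ∈ T.biUnion B := by
          rw [hequ]
          exact Finset.mem_erase.mpr ⟨hv, Finset.mem_univ v⟩
        obtain ⟨U, hU, hvU⟩ := Finset.mem_biUnion.mp this
        simp only [hB, Finset.mem_erase, Finset.mem_filter] at hvU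
        exact ⟨U, (Set.Finite.mem_toFinset hSfin).mp hU, hvU.2.2⟩
    · -- spread → equality
      rintro ⟨-, hcover⟩
      have hequ : T.biUnion B = Finset.univ.erase 0 := by
        refine Finset.Subset.antisymm hsub ?_
        intro v hv
        obtain ⟨hv0, -⟩ := Finset.mem_erase.mp hv
        obtain ⟨U, hUS, hvU⟩ := hcover v
        refine Finset.mem_biUnion.mpr ⟨U, (Set.Finite.mem_toFinset hSfin).mpr hUS, ?_⟩
        simp only [hB, Finset.mem_erase, Finset.mem_filter]
        exact ⟨hv0, Finset.mem_univ v, hvU⟩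
      have hTc : T.card * (q ^ k - 1) = q ^ n - 1 := by
        rw [← hbiU, hequ, huniv]
      rw [hcardeq, hTcard, ← hTc, Nat.mul_div_cancel _ (by omega)]
end
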